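/- Let D = (V, A, ψ) be a multidigraph, let s, t ∈ V, and let k ∈ ℕ. Let P and Q be two nonempty subsets of V with V = P ⊔ Q. Then |{B ∈ U_k : S(B) = P}| = Σ_{m ∈ ℕ} C(|A(P,Q)|, m) · |X_{k−m}^{P,Q}|, where C(n, m) denotes the binomial coefficient. -/

import Mathlib

/-!
A multidigraph is given by two finite types `V` (vertices) and `A` (arcs)
together with a map `ψ : A → V × V` sending each arc to its (source, target) pair.
For a subset `B ⊆ A`, the induced subdigraph `D⟨B⟩` has vertex set `V` and arc set `B`.
-/

/-- There is an arc of `B` from `v` to `w` in the subdigraph `D⟨B⟩`. -/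
def ArcStep {V A : Type*} (ψ : A → V × V) (B : Set A) (v w : V) : Prop :=
  ∃ a ∈ B, ψ a = (v, w)

/-- `v` can `B`-reach `w`: the subdigraph `D⟨B⟩` has a walk from `v` to `w`. -/
def CanReach {V A : Type*} (ψ : A → V × V) (B : Set A) (v w : V) : Prop :=
  Relation.ReflTransGen (ArcStep ψ B) v w

/-- `B ⊆ A` is acyclic: the subdigraph `D⟨B⟩` has no directed cycles
(equivalently, no closed walk of positive length). -/
def IsAcyclic {V A : Type*} (ψ : A → V × V) (B : Set A) : Prop :=
  ∀ v : V, ¬ Relation.TransGen (ArcStep ψ B) v v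

/-- `B` is an `s`-convergence: `B` is acyclic and `s` is a to-root of `D⟨B⟩`,
i.e. every vertex can `B`-reach `s`. -/
def IsConvergence {V A : Type*} (ψ : A → V × V) (B : Set A) (s : V) : Prop :=
  IsAcyclic ψ B ∧ ∀ v : V, CanReach ψ B v s

/-- `γ_k(s)`: the number of `s`-convergences of size `k`. -/
noncomputable def gammaCount {V A : Type*} (ψ : A → V × V) (k : ℕ) (s : V) : ℕ :=
  {B : Set A | IsConvergence ψ B s ∧ B.ncard = k}.ncard

/-- The attraction basin of `s` with respect to `B`: all vertices that can `B`-reach `s`. -/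
def basin {V A : Type*} (ψ : A → V × V) (B : Set A) (s : V) : Set V :=
  {v : V | CanReach ψ B v s}

/-- `A(P,Q)`: the set of arcs with source in `P` and target in `Q`. -/
def arcsFromTo {V A : Type*} (ψ : A → V × V) (P Q : Set V) : Set A :=
  {a : A | (ψ a).1 ∈ P ∧ (ψ a).2 ∈ Q}

/-- The outdegree of a vertex: the number of arcs with source `v`. -/
noncomputable def outDeg {V A : Type*} (ψ : A → V × V) (v : V) : ℕ :=
  {a : A | (ψ a).1 = v}.ncard

/-- The indegree of a vertex: the number of arcs with target `v`. -/
noncomputable def inDeg {V A : Type*} (ψ : A → V × V) (v : V) : ℕ :=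
  {a : A | (ψ a).2 = v}.ncard

/-- The digraph is balanced: each vertex has outdegree equal to indegree. -/
def IsBalanced {V A : Type*} (ψ : A → V × V) : Prop :=
  ∀ v : V, outDeg ψ v = inDeg ψ v

/-- `U_k`: the set of all acyclic `k`-element subsets `B` of `A` such that each
vertex can `B`-reach `s` or can `B`-reach `t`. -/
def Uset {V A : Type*} (ψ : A → V × V) (s t : V) (k : ℕ) : Set (Set A) :=
  {B : Set A | IsAcyclic ψ B ∧ B.ncard = k ∧ basin ψ B s ∪ basin ψ B t = Set.univ}

/-- `X_i^{P,Q}`: the set of all acyclic `i`-element subsets `B` of `A` with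
`S(B) = P` and `T(B) = Q` (empty for negative `i`). -/
def Xset {V A : Type*} (ψ : A → V × V) (s t : V) (P Q : Set V) (i : ℤ) : Set (Set A) :=
  {B : Set A | IsAcyclic ψ B ∧ (B.ncard : ℤ) = i ∧ basin ψ B s = P ∧ basin ψ B t = Q}

/-- `|X_i^{P,Q}|`. -/
noncomputable def Xcount {V A : Type*} (ψ : A → V × V) (s t : V) (P Q : Set V) (i : ℤ) : ℕ :=
  (Xset ψ s t P Q i).ncard

/-!
Write `F = A(P, Q)` and `Q = Pᶜ`. If `S(B) = P` then no arc of `B` enters `P` from `Q`, so a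
walk ending in `P` stays in `P` and a walk starting in `Q` stays in `Q`. Arcs of `F` therefore
play no role in reaching `s` (their targets lie in `Q`), nor in reaching `t` from `Q` (their
sources lie in `P`), nor in any cycle. Hence `B ∈ U_k` with `S(B) = P` exactly when
`B \ F ∈ X_{k - |B ∩ F|}^{P,Q}`, with `B ∩ F ⊆ F` arbitrary; sorting by `m = |B ∩ F|` gives
the sum.
-/

section Reachability

variable {V A : Type*} {ψ : A → V × V} {B B' : Set A} {W : Set V} {v w : V}

theorem ArcStep.mono (hB : B ⊆ B') : ArcStep ψ B ≤ ArcStep ψ B' :=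
  fun _ _ ⟨a, ha, he⟩ => ⟨a, hB ha, he⟩

theorem CanReach.mono (hB : B ⊆ B') (h : CanReach ψ B v w) : CanReach ψ B' v w :=
  Relation.ReflTransGen.mono (ArcStep.mono hB) v w h

theorem IsAcyclic.subset (hB' : IsAcyclic ψ B') (hB : B ⊆ B') : IsAcyclic ψ B :=
  fun v hv => hB' v (Relation.TransGen.mono (ArcStep.mono hB) v v hv)

theorem CanReach.restrict_of_target_mem (hW : ∀ a ∈ B, (ψ a).2 ∈ W → a ∈ B' ∧ (ψ a).1 ∈ W)
    (h : CanReach ψ B v w) (hw : w ∈ W) : CanReach ψ B' v w ∧ v ∈ W := by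
  induction h using Relation.ReflTransGen.head_induction_on with
  | refl => exact ⟨.refl, hw⟩
  | head hstep _ ih =>
    obtain ⟨a, ha, he⟩ := hstep
    obtain ⟨rfl, rfl⟩ := Prod.ext_iff.mp he
    obtain ⟨haB', hsrc⟩ := hW a ha ih.2
    exact ⟨.head ⟨a, haB', he⟩ ih.1, hsrc⟩

theorem CanReach.restrict_of_source_mem (hW : ∀ a ∈ B, (ψ a).1 ∈ W → a ∈ B' ∧ (ψ a).2 ∈ W)
    (h : CanReach ψ B v w) (hv : v ∈ W) : CanReach ψ B' v w ∧ w ∈ W := by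
  induction h with
  | refl => exact ⟨.refl, hv⟩
  | tail _ hstep ih =>
    obtain ⟨a, ha, he⟩ := hstep
    obtain ⟨rfl, rfl⟩ := Prod.ext_iff.mp he
    obtain ⟨haB', htgt⟩ := hW a ha ih.2
    exact ⟨.tail ih.1 ⟨a, haB', he⟩, htgt⟩

/-- A cycle stays inside `W` or inside `Wᶜ`, and in either case uses only arcs of `B'`. -/
theorem IsAcyclic.of_restrict (hB' : IsAcyclic ψ B')
    (hin : ∀ a ∈ B, (ψ a).2 ∈ W → a ∈ B' ∧ (ψ a).1 ∈ W)
    (hout : ∀ a ∈ B, (ψ a).1 ∉ W → a ∈ B' ∧ (ψ a).2 ∉ W) : IsAcyclic ψ B := by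
  intro v hv
  by_cases hvW : v ∈ W
  · obtain ⟨u, ⟨a, ha, he⟩, hu⟩ := Relation.TransGen.head'_iff.mp hv
    obtain ⟨hu', huW⟩ := CanReach.restrict_of_target_mem hin hu hvW
    obtain ⟨rfl, rfl⟩ := Prod.ext_iff.mp he
    exact hB' _ (.head' ⟨a, (hin a ha huW).1, he⟩ hu')
  · obtain ⟨u, hu, ⟨a, ha, he⟩⟩ := Relation.TransGen.tail'_iff.mp hv
    obtain ⟨hu', huW⟩ := CanReach.restrict_of_source_mem (W := Wᶜ) hout hu hvW
    obtain ⟨rfl, rfl⟩ := Prod.ext_iff.mp he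
    exact hB' _ (.tail' hu' ⟨a, (hout a ha huW).1, he⟩)

theorem source_mem_basin {s : V} {a : A} (ha : a ∈ B) (h : (ψ a).2 ∈ basin ψ B s) :
    (ψ a).1 ∈ basin ψ B s :=
  Relation.ReflTransGen.head ⟨a, ha, rfl⟩ h

end Reachability

section Counting

variable {α β : Type*}

theorem Set.ncard_eq_finsum_ncard_fiber {S : Set α} (hS : S.Finite) (f : α → β) :
    S.ncard = ∑ᶠ b, {a ∈ S | f a = b}.ncard := by
  classical
  rw [finsum_eq_sum_of_support_subset (s := hS.toFinset.image f), Set.ncard_eq_toFinset_card S hS,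
    Finset.card_eq_sum_card_image f]
  · refine Finset.sum_congr rfl fun b _ => ?_
    rw [Set.ncard_eq_toFinset_card _ (hS.subset (Set.sep_subset _ _))]
    congr 1
    ext a
    simp
  · intro b hb
    obtain ⟨a, ha, rfl⟩ := Set.nonempty_of_ncard_ne_zero hb
    simpa using ⟨a, ha, rfl⟩

theorem ncard_setOf_inter_diff_eq_choose_mul [Finite α] (F : Set α) {𝒳 : Set (Set α)}
    (h𝒳 : ∀ X ∈ 𝒳, Disjoint X F) (m : ℕ) :
    {B : Set α | (B ∩ F).ncard = m ∧ B \ F ∈ 𝒳}.ncard = F.ncard.choose m * 𝒳.ncard := by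
  have hsplit : ∀ C ⊆ F, ∀ X ∈ 𝒳, (C ∪ X) ∩ F = C ∧ (C ∪ X) \ F = X := fun C hCF X hX =>
    ⟨by rw [Set.union_inter_distrib_right, Set.inter_eq_left.mpr hCF, (h𝒳 X hX).inter_eq,
        Set.union_empty],
      by rw [Set.union_sdiff_distrib, Set.sdiff_eq_empty.mpr hCF, (h𝒳 X hX).sdiff_eq_left,
        Set.empty_union]⟩
  have himage : {B : Set α | (B ∩ F).ncard = m ∧ B \ F ∈ 𝒳} =
      (fun p : Set α × Set α => p.1 ∪ p.2) '' ({C ⊆ F | C.ncard = m} ×ˢ 𝒳) := by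
    ext B
    constructor
    · rintro ⟨hm, hX⟩
      exact ⟨(B ∩ F, B \ F), ⟨⟨Set.inter_subset_right, hm⟩, hX⟩, Set.inter_union_sdiff B F⟩
    · rintro ⟨⟨C, X⟩, ⟨⟨hCF, rfl⟩, hX⟩, rfl⟩
      obtain ⟨hinter, hdiff⟩ := hsplit C hCF X hX
      exact ⟨by rw [hinter], by rwa [hdiff]⟩
  rw [himage, Set.InjOn.ncard_image, Set.ncard_prod, Set.ncard_powerset_ncard F.toFinite]
  rintro ⟨C₁, X₁⟩ ⟨⟨hC₁, -⟩, hX₁⟩ ⟨C₂, X₂⟩ ⟨⟨hC₂, -⟩, hX₂⟩ (h : C₁ ∪ X₁ = C₂ ∪ X₂)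
  obtain ⟨hinter₁, hdiff₁⟩ := hsplit C₁ hC₁ X₁ hX₁
  obtain ⟨hinter₂, hdiff₂⟩ := hsplit C₂ hC₂ X₂ hX₂
  rw [h] at hinter₁ hdiff₁
  exact Prod.ext (hinter₁.symm.trans hinter₂) (hdiff₁.symm.trans hdiff₂)

end Counting

section Partition

variable {V A : Type*} {ψ : A → V × V} {s t : V} {P : Set V} {B : Set A} {a : A}

theorem mem_diff_arcsFromTo_of_target_mem
    (hback : ∀ a ∈ B \ arcsFromTo ψ P Pᶜ, (ψ a).2 ∈ P → (ψ a).1 ∈ P) (ha : a ∈ B)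
    (htgt : (ψ a).2 ∈ P) : a ∈ B \ arcsFromTo ψ P Pᶜ ∧ (ψ a).1 ∈ P :=
  have ha' : a ∈ B \ arcsFromTo ψ P Pᶜ := ⟨ha, fun hF => hF.2 htgt⟩
  ⟨ha', hback a ha' htgt⟩

theorem mem_diff_arcsFromTo_of_source_notMem
    (hback : ∀ a ∈ B \ arcsFromTo ψ P Pᶜ, (ψ a).2 ∈ P → (ψ a).1 ∈ P) (ha : a ∈ B)
    (hsrc : (ψ a).1 ∉ P) : a ∈ B \ arcsFromTo ψ P Pᶜ ∧ (ψ a).2 ∉ P :=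
  have ha' : a ∈ B \ arcsFromTo ψ P Pᶜ := ⟨ha, fun hF => hsrc hF.1⟩
  ⟨ha', fun htgt => hsrc (hback a ha' htgt)⟩

theorem disjoint_arcsFromTo_of_mem_Xset {i : ℤ} (hB : B ∈ Xset ψ s t P Pᶜ i) :
    Disjoint B (arcsFromTo ψ P Pᶜ) := by
  obtain ⟨-, -, -, hT⟩ := hB
  refine Set.disjoint_left.mpr fun a ha ⟨hsrc, htgt⟩ => ?_
  rw [← hT] at htgt
  exact (hT ▸ source_mem_basin ha htgt : (ψ a).1 ∈ Pᶜ) hsrc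

theorem diff_arcsFromTo_mem_Xset [Finite A] {k : ℕ} (hPc : Pᶜ.Nonempty) (hU : B ∈ Uset ψ s t k)
    (hS : basin ψ B s = P) :
    B \ arcsFromTo ψ P Pᶜ ∈ Xset ψ s t P Pᶜ (k - (B ∩ arcsFromTo ψ P Pᶜ).ncard) := by
  set F := arcsFromTo ψ P Pᶜ
  obtain ⟨hacyc, hcard, hcover⟩ := hU
  have hback : ∀ a ∈ B \ F, (ψ a).2 ∈ P → (ψ a).1 ∈ P := fun a ha htgt =>
    hS ▸ source_mem_basin ha.1 (hS ▸ htgt)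
  have hreach : ∀ v ∉ P, CanReach ψ B v t := fun v hv =>
    ((hcover ▸ Set.mem_univ v : v ∈ basin ψ B s ∪ basin ψ B t)).resolve_left (hS ▸ hv)
  have hreach' : ∀ v ∉ P, CanReach ψ (B \ F) v t ∧ t ∉ P := fun v hv =>
    CanReach.restrict_of_source_mem (W := Pᶜ)
      (fun _ ha => mem_diff_arcsFromTo_of_source_notMem hback ha) (hreach v hv) hv
  obtain ⟨q, hq⟩ := hPc
  have ht : t ∉ P := (hreach' q hq).2
  refine ⟨hacyc.subset Set.sdiff_subset, ?_, ?_, ?_⟩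
  · have := Set.ncard_inter_add_ncard_sdiff_eq_ncard B F
    omega
  · ext v
    refine ⟨fun h => hS ▸ CanReach.mono Set.sdiff_subset h, fun h => ?_⟩
    exact (CanReach.restrict_of_target_mem (fun _ ha => mem_diff_arcsFromTo_of_target_mem hback ha)
      (hS ▸ h : v ∈ basin ψ B s) (hS ▸ .refl)).1
  · ext v
    refine ⟨fun h => (CanReach.restrict_of_target_mem (W := Pᶜ) (B' := B \ F) ?_ h ht).2, fun h => (hreach' v h).1⟩
    exact fun a ha htgt => ⟨ha, fun hsrc => ha.2 ⟨hsrc, htgt⟩⟩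

theorem mem_Uset_of_diff_arcsFromTo_mem_Xset [Finite A] {k : ℕ}
    (hX : B \ arcsFromTo ψ P Pᶜ ∈ Xset ψ s t P Pᶜ (k - (B ∩ arcsFromTo ψ P Pᶜ).ncard)) :
    B ∈ Uset ψ s t k ∧ basin ψ B s = P := by
  set F := arcsFromTo ψ P Pᶜ
  obtain ⟨hacyc, hcard, hS, hT⟩ := hX
  have hback : ∀ a ∈ B \ F, (ψ a).2 ∈ P → (ψ a).1 ∈ P := fun a ha htgt =>
    hS ▸ source_mem_basin ha (hS ▸ htgt)
  have hin := fun a (ha : a ∈ B) => mem_diff_arcsFromTo_of_target_mem hback ha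
  have hout := fun a (ha : a ∈ B) => mem_diff_arcsFromTo_of_source_notMem hback ha
  have hSB : basin ψ B s = P := by
    ext v
    refine ⟨fun h => (CanReach.restrict_of_target_mem hin h (hS ▸ .refl)).2, fun h => ?_⟩
    exact CanReach.mono Set.sdiff_subset (hS ▸ h : v ∈ basin ψ (B \ F) s)
  refine ⟨⟨hacyc.of_restrict hin hout, ?_, ?_⟩, hSB⟩
  · have := Set.ncard_inter_add_ncard_sdiff_eq_ncard B F
    omega
  · refine Set.eq_univ_of_forall fun v => ?_
    by_cases hv : v ∈ P
    · exact .inl (hSB ▸ hv)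
    · exact .inr (CanReach.mono Set.sdiff_subset (hT ▸ hv : v ∈ basin ψ (B \ F) t))

end Partition

theorem count_S_eq_P_as_sum_general {V A : Type*} [Fintype A]
    (ψ : A → V × V) (s t : V) (k : ℕ)
    (P Q : Set V) (hQ : Q.Nonempty)
    (hunion : P ∪ Q = Set.univ) (hdisj : P ∩ Q = ∅) :
    {B ∈ Uset ψ s t k | basin ψ B s = P}.ncard =
      ∑ᶠ m : ℕ,
        Nat.choose (arcsFromTo ψ P Q).ncard m * Xcount ψ s t P Q ((k : ℤ) - m) := by
  obtain rfl : Q = Pᶜ := eq_compl_iff_isCompl.mpr (IsCompl.of_eq hdisj hunion).symm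
  set F := arcsFromTo ψ P Pᶜ
  rw [Set.ncard_eq_finsum_ncard_fiber (Set.toFinite _) fun B => (B ∩ F).ncard]
  refine finsum_congr fun m => ?_
  rw [Xcount, ← ncard_setOf_inter_diff_eq_choose_mul F
    (fun _ hX => disjoint_arcsFromTo_of_mem_Xset hX) m]
  congr 1
  ext B
  constructor
  · rintro ⟨⟨hU, hS⟩, rfl⟩
    exact ⟨rfl, diff_arcsFromTo_mem_Xset hQ hU hS⟩
  · rintro ⟨rfl, hX⟩
    exact ⟨mem_Uset_of_diff_arcsFromTo_mem_Xset hX, rfl⟩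

/-- For nonempty `P, Q` with `V = P ⊔ Q`,
`|{B ∈ U_k : S(B) = P}| = Σ_{m ∈ ℕ} C(|A(P,Q)|, m) · |X_{k−m}^{P,Q}|`. -/
theorem count_S_eq_P_as_sum {V A : Type*} [Fintype V] [Fintype A]
    (ψ : A → V × V) (s t : V) (k : ℕ)
    (P Q : Set V) (hP : P.Nonempty) (hQ : Q.Nonempty)
    (hunion : P ∪ Q = Set.univ) (hdisj : P ∩ Q = ∅) :
    {B ∈ Uset ψ s t k | basin ψ B s = P}.ncard =
      ∑ᶠ m : ℕ,
        Nat.choose (arcsFromTo ψ P Q).ncard m * Xcount ψ s t P Q ((k : ℤ) - m) :=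
  count_S_eq_P_as_sum_general ψ s t k P Q hQ hunion hdisj
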